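/- arXiv:1102.4744 — 2 statements merged into one kernel-verified Lean document; each statement's English description precedes it below -/
import Mathlib

section
/- Let λ > 0 with 2/λ not an integer, and set A = 2+λ and B = λ. Then for every n ≥ 1: a_n = ((2λ²+8λ+5)·Δ(n,1,A,B) − (λ+3)·Δ(n,2,A,B))/λ and b_n = ((2λ²+4λ+1)·Δ(n,1,A,B) − (λ+1)·Δ(n,2,A,B))/λ. -/
open Real

/-- Bessel function of the first kind of real order `ν`, for real `z > 0`,
defined by the series `∑ (−1)^m / (m! Γ(m+ν+1)) (z/2)^(2m+ν)` (real powers). -/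
noncomputable def besselJ (ν z : ℝ) : ℝ :=
  ∑' m : ℕ, ((-1 : ℝ) ^ m / (m.factorial * Real.Gamma ((m : ℝ) + ν + 1)))
      * (z / 2) ^ (2 * (m : ℝ) + ν)

/-- Bessel function of the second kind for non-integer real order. -/
noncomputable def besselY (ν z : ℝ) : ℝ :=
  (besselJ ν z * Real.cos (ν * Real.pi) - besselJ (-ν) z) / Real.sin (ν * Real.pi)

/-- `Ĵ_n = J_{n+A/B}(2/B)`. -/
noncomputable def Jhat (A B : ℝ) (n : ℤ) : ℝ := besselJ ((n : ℝ) + A / B) (2 / B)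

/-- `Ŷ_n = Y_{n+A/B}(2/B)`. -/
noncomputable def Yhat (A B : ℝ) (n : ℤ) : ℝ := besselY ((n : ℝ) + A / B) (2 / B)

/-- `Υ(n, m, A, B) = π (Ĵ_n Ŷ_m − Ĵ_m Ŷ_n)`. -/
noncomputable def Ups (n m : ℤ) (A B : ℝ) : ℝ :=
  Real.pi * (Jhat A B n * Yhat A B m - Jhat A B m * Yhat A B n)
/-- `Δ(n, m, A, B) = Υ(n, m, A, B) − Υ(n−1, m, A, B)`. -/
noncomputable def Dlt (n m : ℤ) (A B : ℝ) : ℝ := Ups n m A B - Ups (n - 1) m A B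

/-!
Write `J_μ(z) = (z/2)^μ S_μ(-z²/4)` with the entire series `S_μ(x) = ∑ x^m / (m! Γ(m+μ+1))`.
The three-term recurrence of `J` becomes the coefficient identity
`S_{μ-1} = μ S_μ + x S_{μ+1}`, and it passes to `Y`, which is a combination of `J_ν` and `J_{-ν}`.
Comparing Cauchy products gives `S_ν S_{-ν-1} - x S_{ν+1} S_{-ν} = 1/(Γ(ν+1) Γ(-ν))`, which by
Euler's reflection formula is the Casoratian `J_{ν+1} Y_ν - J_ν Y_{ν+1} = 2/(πz)`.
Hence `n ↦ Υ(n, m)` solves `u_{n+1} = (Bn + A) u_n - u_{n-1}` with `Υ(n+1, n) = B`, its differences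
`Δ(·, m)` solve the third-order recurrence of `a` and `b` when `A = 2 + λ`, `B = λ`, and the
claimed combinations agree with `a` and `b` at `n = 1, 2, 3`.
-/

open Finset

noncomputable def besselCoeff (μ : ℝ) (m : ℕ) : ℝ := ((m.factorial : ℝ) * Gamma (m + μ + 1))⁻¹

noncomputable def besselSeries (μ x : ℝ) : ℝ := ∑' m : ℕ, besselCoeff μ m * x ^ m

lemma Gamma_inv_eq_mul_Gamma_add_one_inv (x : ℝ) : (Gamma x)⁻¹ = x * (Gamma (x + 1))⁻¹ := by
  rcases eq_or_ne x 0 with rfl | hx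
  · simp
  · rw [Gamma_add_one hx, mul_inv, ← mul_assoc, mul_inv_cancel₀ hx, one_mul]

lemma besselCoeff_eq_mul_succ (μ : ℝ) (m : ℕ) :
    besselCoeff μ m = (m + 1) * (m + 1 + μ) * besselCoeff μ (m + 1) := by
  rw [besselCoeff, besselCoeff, mul_inv, mul_inv, Gamma_inv_eq_mul_Gamma_add_one_inv,
    Nat.factorial_succ]
  push_cast
  rw [show (m : ℝ) + 1 + μ + 1 = m + μ + 1 + 1 by ring]
  field_simp
  ring

lemma besselCoeff_add_one (μ : ℝ) (m : ℕ) :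
    besselCoeff (μ + 1) m = (m + 1) * besselCoeff μ (m + 1) := by
  rw [besselCoeff, besselCoeff, Nat.factorial_succ]
  push_cast
  rw [show (m : ℝ) + 1 + μ + 1 = m + (μ + 1) + 1 by ring]
  field_simp

lemma besselCoeff_sub_one (μ : ℝ) (m : ℕ) :
    besselCoeff (μ - 1) m = (m + μ) * besselCoeff μ m := by
  rw [besselCoeff, besselCoeff, mul_inv, mul_inv, show (m : ℝ) + (μ - 1) + 1 = m + μ by ring,
    Gamma_inv_eq_mul_Gamma_add_one_inv]
  ring

lemma besselCoeff_zero (μ : ℝ) : besselCoeff μ 0 = (Gamma (μ + 1))⁻¹ := by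
  simp [besselCoeff]

lemma abs_besselCoeff_le {μ : ℝ} {m : ℕ} (h : 1 ≤ m + μ) :
    |besselCoeff μ m| ≤ (m.factorial : ℝ)⁻¹ := by
  have hΓ : 1 ≤ Gamma (m + μ + 1) := by
    have := Gamma_strictMonoOn_Ici.monotoneOn (a := 2) (b := m + μ + 1) (by simp)
      (by simp only [Set.mem_Ici]; linarith) (by linarith)
    rwa [Gamma_two] at this
  have hfac : (0 : ℝ) < m.factorial := by positivity
  rw [besselCoeff, abs_of_pos (by positivity)]
  exact inv_anti₀ hfac (le_mul_of_one_le_right hfac.le hΓ)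

lemma summable_norm_besselCoeff_mul_pow (μ x : ℝ) :
    Summable fun m => ‖besselCoeff μ m * x ^ m‖ := by
  obtain ⟨N, hN⟩ := exists_nat_ge (1 - μ)
  refine (Real.summable_pow_div_factorial |x|).of_norm_bounded_eventually_nat ?_
  filter_upwards [Filter.eventually_ge_atTop N] with m hm
  have h : 1 ≤ (m : ℝ) + μ := by
    have : (N : ℝ) ≤ m := by exact_mod_cast hm
    linarith
  rw [norm_norm, norm_mul, norm_pow, Real.norm_eq_abs, Real.norm_eq_abs, div_eq_inv_mul]
  exact mul_le_mul_of_nonneg_right (abs_besselCoeff_le h) (by positivity)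

lemma hasSum_besselSeries (μ x : ℝ) :
    HasSum (fun m => besselCoeff μ m * x ^ m) (besselSeries μ x) :=
  (summable_norm_besselCoeff_mul_pow μ x).of_norm.hasSum

lemma besselJ_eq_rpow_mul_besselSeries {z : ℝ} (hz : 0 < z) (μ : ℝ) :
    besselJ μ z = (z / 2) ^ μ * besselSeries μ (-(z / 2) ^ 2) := by
  rw [besselJ, besselSeries, ← tsum_mul_left]
  refine tsum_congr fun m => ?_
  rw [rpow_add (by positivity), show 2 * (m : ℝ) = ((2 * m : ℕ) : ℝ) by push_cast; ring,
    rpow_natCast, neg_pow ((z / 2) ^ 2), pow_mul, besselCoeff, div_eq_mul_inv]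
  ring

lemma besselSeries_sub_one (μ x : ℝ) :
    besselSeries (μ - 1) x = μ * besselSeries μ x + x * besselSeries (μ + 1) x := by
  have hshift : HasSum (fun m : ℕ => (m : ℝ) * besselCoeff μ m * x ^ m)
      (x * besselSeries (μ + 1) x) := by
    have h := HasSum.zero_add (f := fun m : ℕ => (m : ℝ) * besselCoeff μ m * x ^ m)
      (((hasSum_besselSeries (μ + 1) x).mul_left x).congr_fun fun m => by
        rw [besselCoeff_add_one]; push_cast; ring)
    rwa [Nat.cast_zero, zero_mul, zero_mul, zero_add] at h
  have hdiff := (hasSum_besselSeries (μ - 1) x).sub ((hasSum_besselSeries μ x).mul_left μ)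
  have := hdiff.unique (hshift.congr_fun fun m => by rw [besselCoeff_sub_one]; ring)
  linarith

lemma hasSum_sum_antidiagonal_mul_pow {R : Type*} [NormedCommRing R] [CompleteSpace R]
    {a b : ℕ → R} {x : R} (ha : Summable fun n => ‖a n * x ^ n‖)
    (hb : Summable fun n => ‖b n * x ^ n‖) :
    HasSum (fun n => (∑ p ∈ antidiagonal n, a p.1 * b p.2) * x ^ n)
      ((∑' n, a n * x ^ n) * ∑' n, b n * x ^ n) := by
  have hterm : ∀ n, ∑ p ∈ antidiagonal n, a p.1 * x ^ p.1 * (b p.2 * x ^ p.2)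
      = (∑ p ∈ antidiagonal n, a p.1 * b p.2) * x ^ n := fun n => by
    rw [sum_mul]
    refine sum_congr rfl fun p hp => ?_
    rw [← mem_antidiagonal.mp hp, pow_add]
    ring
  rw [tsum_mul_tsum_eq_tsum_sum_antidiagonal_of_summable_norm ha hb]
  simp_rw [← hterm]
  exact (summable_norm_sum_mul_antidiagonal_of_summable_norm ha hb).of_norm.hasSum

lemma sum_antidiagonal_besselCoeff_mul_sq (ν : ℝ) (N : ℕ) :
    ∑ p ∈ antidiagonal (N + 1), (p.1 * (p.1 + ν) - p.2 * (p.2 - ν)) *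
      (besselCoeff ν p.1 * besselCoeff (-ν) p.2) = 0 := by
  simp_rw [sub_mul, sum_sub_distrib, sub_eq_zero]
  rw [Nat.sum_antidiagonal_succ, Nat.sum_antidiagonal_succ']
  simp only [Nat.cast_zero, zero_mul, zero_add]
  refine sum_congr rfl fun p _ => ?_
  rw [besselCoeff_eq_mul_succ ν p.1, besselCoeff_eq_mul_succ (-ν) p.2]
  push_cast
  ring

lemma sum_antidiagonal_besselCoeff_succ (ν : ℝ) (k : ℕ) :
    ∑ p ∈ antidiagonal (k + 1), besselCoeff ν p.1 * besselCoeff (-ν - 1) p.2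
      = ∑ p ∈ antidiagonal k, besselCoeff (ν + 1) p.1 * besselCoeff (-ν) p.2 := by
  set h : ℕ × ℕ → ℝ := fun p => besselCoeff ν p.1 * besselCoeff (-ν) p.2
  have hk : (k + 1 : ℝ) ≠ 0 := by positivity
  -- on the antidiagonal `i + j = k + 1`: `(k + 1) (j - ν - i) = -(i (i + ν) - j (j - ν))`
  have hzero : ∑ p ∈ antidiagonal (k + 1), (p.2 - ν - p.1) * h p = 0 := by
    refine (mul_eq_zero.mp ?_).resolve_left hk
    rw [mul_sum, ← neg_eq_zero, ← sum_neg_distrib, ← sum_antidiagonal_besselCoeff_mul_sq ν k]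
    refine sum_congr rfl fun p hp => ?_
    have hp' : (p.1 : ℝ) + p.2 = k + 1 := by exact_mod_cast mem_antidiagonal.mp hp
    rw [← hp']
    ring
  have hleft : ∑ p ∈ antidiagonal (k + 1), besselCoeff ν p.1 * besselCoeff (-ν - 1) p.2
      = ∑ p ∈ antidiagonal (k + 1), (p.2 - ν) * h p :=
    sum_congr rfl fun p _ => by rw [besselCoeff_sub_one]; ring
  have hright : ∑ p ∈ antidiagonal k, besselCoeff (ν + 1) p.1 * besselCoeff (-ν) p.2
      = ∑ p ∈ antidiagonal (k + 1), p.1 * h p := by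
    rw [Nat.sum_antidiagonal_succ, Nat.cast_zero, zero_mul, zero_add]
    refine sum_congr rfl fun p _ => ?_
    rw [besselCoeff_add_one]
    push_cast
    ring
  rw [hleft, hright, ← sub_eq_zero, ← sum_sub_distrib, ← hzero]
  exact sum_congr rfl fun p _ => by ring

lemma besselSeries_mul_sub (ν x : ℝ) :
    besselSeries ν x * besselSeries (-ν - 1) x - x * (besselSeries (ν + 1) x * besselSeries (-ν) x)
      = (Gamma (ν + 1) * Gamma (-ν))⁻¹ := by
  set P : ℕ → ℝ := fun n => ∑ p ∈ antidiagonal n, besselCoeff ν p.1 * besselCoeff (-ν - 1) p.2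
  have hprod := hasSum_sum_antidiagonal_mul_pow (summable_norm_besselCoeff_mul_pow ν x)
    (summable_norm_besselCoeff_mul_pow (-ν - 1) x)
  have hshift := HasSum.zero_add (f := fun n => P n * x ^ n)
    ((hasSum_sum_antidiagonal_mul_pow (summable_norm_besselCoeff_mul_pow (ν + 1) x)
      (summable_norm_besselCoeff_mul_pow (-ν) x)).mul_left x |>.congr_fun fun n => by
        simp only [P, sum_antidiagonal_besselCoeff_succ]; ring)
  have hP0 : P 0 = (Gamma (ν + 1) * Gamma (-ν))⁻¹ := by
    simp only [P, HasAntidiagonal.antidiagonal_zero, sum_singleton, besselCoeff_zero,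
      sub_add_cancel, mul_inv]
  unfold besselSeries
  rw [hprod.unique hshift, hP0, pow_zero, mul_one]
  ring

theorem besselJ_sub_one_add_besselJ_add_one {z : ℝ} (hz : 0 < z) (ν : ℝ) :
    besselJ (ν - 1) z + besselJ (ν + 1) z = 2 * ν / z * besselJ ν z := by
  have hw : z / 2 ≠ 0 := by positivity
  simp only [besselJ_eq_rpow_mul_besselSeries hz, rpow_sub_one hw, rpow_add_one hw,
    besselSeries_sub_one]
  field_simp
  ring

theorem besselJ_casoratian {z : ℝ} (hz : 0 < z) (ν : ℝ) :
    besselJ (ν + 1) z * besselJ (-ν) z + besselJ ν z * besselJ (-ν - 1) z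
      = -2 * sin (π * ν) / (π * z) := by
  have hw : 0 < z / 2 := by positivity
  have hreflection : (Gamma (ν + 1) * Gamma (-ν))⁻¹ = -sin (π * ν) / π := by
    rw [show -ν = 1 - (ν + 1) by ring, Gamma_mul_Gamma_one_sub, mul_add, mul_one, sin_add_pi,
      inv_div, neg_div]
  have hcross := besselSeries_mul_sub ν (-(z / 2) ^ 2)
  rw [hreflection] at hcross
  simp only [besselJ_eq_rpow_mul_besselSeries hz]
  rw [rpow_add_one hw.ne', rpow_neg hw.le, sub_eq_add_neg, rpow_add hw, rpow_neg hw.le,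
    rpow_neg hw.le, rpow_one]
  field_simp
  field_simp at hcross
  linear_combination hcross

theorem besselY_sub_one_add_besselY_add_one {z : ℝ} (hz : 0 < z) (ν : ℝ) :
    besselY (ν - 1) z + besselY (ν + 1) z = 2 * ν / z * besselY ν z := by
  have hJ := besselJ_sub_one_add_besselJ_add_one hz ν
  have hJneg := besselJ_sub_one_add_besselJ_add_one hz (-ν)
  simp only [besselY, sub_mul, add_mul, one_mul, sin_sub_pi, cos_sub_pi, sin_add_pi, cos_add_pi,
    neg_add, ← sub_eq_add_neg, neg_sub', sub_neg_eq_add]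
  simp only [div_eq_mul_inv, inv_neg] at hJ hJneg ⊢
  linear_combination cos (ν * π) * (sin (ν * π))⁻¹ * hJ + (sin (ν * π))⁻¹ * hJneg

theorem besselJ_besselY_casoratian {z : ℝ} (hz : 0 < z) {ν : ℝ} (hs : sin (ν * π) ≠ 0) :
    besselJ (ν + 1) z * besselY ν z - besselJ ν z * besselY (ν + 1) z = 2 / (π * z) := by
  have hJ := besselJ_casoratian hz ν
  simp only [besselY, add_mul, one_mul, sin_add_pi, cos_add_pi, neg_add, ← sub_eq_add_neg]
  rw [mul_comm π ν] at hJ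
  have := pi_ne_zero
  have := hz.ne'
  field_simp at hJ ⊢
  linear_combination -hJ

section Hat

variable {A B : ℝ}

theorem Jhat_add_one (hB : 0 < B) (n : ℤ) :
    Jhat A B (n + 1) = (B * n + A) * Jhat A B n - Jhat A B (n - 1) := by
  have h := besselJ_sub_one_add_besselJ_add_one (z := 2 / B) (by positivity) (n + A / B)
  rw [show 2 * ((n : ℝ) + A / B) / (2 / B) = B * n + A by field_simp] at h
  simp only [Jhat, Int.cast_add, Int.cast_sub, Int.cast_one]
  rw [show (n : ℝ) + 1 + A / B = n + A / B + 1 by ring,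
    show (n : ℝ) - 1 + A / B = n + A / B - 1 by ring]
  linarith

theorem Yhat_add_one (hB : 0 < B) (n : ℤ) :
    Yhat A B (n + 1) = (B * n + A) * Yhat A B n - Yhat A B (n - 1) := by
  have h := besselY_sub_one_add_besselY_add_one (z := 2 / B) (by positivity) (n + A / B)
  rw [show 2 * ((n : ℝ) + A / B) / (2 / B) = B * n + A by field_simp] at h
  simp only [Yhat, Int.cast_add, Int.cast_sub, Int.cast_one]
  rw [show (n : ℝ) + 1 + A / B = n + A / B + 1 by ring,
    show (n : ℝ) - 1 + A / B = n + A / B - 1 by ring]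
  linarith

theorem Ups_add_one (hB : 0 < B) (n m : ℤ) :
    Ups (n + 1) m A B = (B * n + A) * Ups n m A B - Ups (n - 1) m A B := by
  simp only [Ups, Jhat_add_one hB, Yhat_add_one hB]
  ring

theorem Ups_self (n : ℤ) : Ups n n A B = 0 := by
  simp only [Ups, sub_self, mul_zero]

theorem Ups_comm (n m : ℤ) : Ups m n A B = -Ups n m A B := by
  simp only [Ups]
  ring

theorem sin_mul_pi_ne_zero (hAB : ∀ k : ℤ, A / B ≠ k) (n : ℤ) : sin ((n + A / B) * π) ≠ 0 := by
  rw [Ne, sin_eq_zero_iff]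
  rintro ⟨k, hk⟩
  apply hAB (k - n)
  push_cast
  linarith [mul_right_cancel₀ pi_ne_zero hk]

theorem Ups_add_one_self (hB : 0 < B) (hAB : ∀ k : ℤ, A / B ≠ k) (n : ℤ) :
    Ups (n + 1) n A B = B := by
  have h := besselJ_besselY_casoratian (z := 2 / B) (by positivity) (sin_mul_pi_ne_zero hAB n)
  simp only [Ups, Jhat, Yhat, Int.cast_add, Int.cast_one]
  rw [show (n : ℝ) + 1 + A / B = n + A / B + 1 by ring, h]
  field_simp

theorem Dlt_eq_recurrence (hB : 0 < B) (n m : ℤ) :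
    Dlt n m A B = (B * n + A - B + 1) * Dlt (n - 1) m A B
      - (B * (n - 2) + A - B + 1) * Dlt (n - 2) m A B + Dlt (n - 3) m A B := by
  have h1 := Ups_add_one (A := A) hB (n - 1) m
  have h2 := Ups_add_one (A := A) hB (n - 2) m
  have h3 := Ups_add_one (A := A) hB (n - 3) m
  rw [sub_add_cancel, show n - 1 - 1 = n - 2 by ring] at h1
  rw [show n - 2 + 1 = n - 1 by ring, show n - 2 - 1 = n - 3 by ring] at h2
  rw [show n - 3 + 1 = n - 2 by ring] at h3
  simp only [Dlt, show n - 1 - 1 = n - 2 by ring, show n - 2 - 1 = n - 3 by ring]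
  push_cast at h1 h2 h3
  linear_combination h1 - 2 * h2 + h3

theorem Dlt_self (hB : 0 < B) (hAB : ∀ k : ℤ, A / B ≠ k) (n : ℤ) : Dlt n n A B = B := by
  have h := Ups_add_one_self hB hAB (n - 1)
  rw [sub_add_cancel] at h
  rw [Dlt, Ups_self, Ups_comm n (n - 1), h, zero_sub, neg_neg]

theorem Dlt_add_one_self (hB : 0 < B) (hAB : ∀ k : ℤ, A / B ≠ k) (n : ℤ) :
    Dlt (n + 1) n A B = B := by
  rw [Dlt, add_sub_cancel_right, Ups_self, Ups_add_one_self hB hAB, sub_zero]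

theorem Dlt_add_two_self (hB : 0 < B) (hAB : ∀ k : ℤ, A / B ≠ k) (n : ℤ) :
    Dlt (n + 2) n A B = (B * (n + 1) + A) * B - B := by
  rw [Dlt, show n + 2 = n + 1 + 1 by ring, add_sub_cancel_right, Ups_add_one hB,
    add_sub_cancel_right, Ups_self, Ups_add_one_self hB hAB]
  push_cast
  ring

theorem Dlt_self_add_one (hB : 0 < B) (hAB : ∀ k : ℤ, A / B ≠ k) (n : ℤ) :
    Dlt n (n + 1) A B = (B * n + A) * B - B := by
  have h := Ups_add_one (A := A) hB n (n + 1)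
  rw [Ups_self, Ups_comm (n + 1) n, Ups_add_one_self hB hAB] at h
  rw [Dlt, Ups_comm (n + 1) n, Ups_add_one_self hB hAB]
  linear_combination -h

theorem Dlt_natCast_eq_recurrence (hB : 0 < B) (m : ℤ) {n : ℕ} (hn : 4 ≤ n) :
    Dlt n m A B = (B * n + A - B + 1) * Dlt ↑(n - 1) m A B
      - (B * ((n : ℝ) - 2) + A - B + 1) * Dlt ↑(n - 2) m A B + Dlt ↑(n - 3) m A B := by
  have h := Dlt_eq_recurrence (A := A) hB n m
  rw [Nat.cast_sub (show 1 ≤ n by omega), Nat.cast_sub (show 2 ≤ n by omega),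
    Nat.cast_sub (show 3 ≤ n by omega)]
  push_cast at h ⊢
  exact h

end Hat

theorem eq_of_third_order_recurrence {R : Type*} [Ring R] {p q x y : ℕ → R}
    (hx : ∀ n, 4 ≤ n → x n = p n * x (n - 1) - q n * x (n - 2) + x (n - 3))
    (hy : ∀ n, 4 ≤ n → y n = p n * y (n - 1) - q n * y (n - 2) + y (n - 3))
    (h1 : x 1 = y 1) (h2 : x 2 = y 2) (h3 : x 3 = y 3) : ∀ n, 1 ≤ n → x n = y n := by
  intro n hn
  induction n using Nat.strong_induction_on with
  | _ n ih =>
    match n, hn with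
    | 1, _ => exact h1
    | 2, _ => exact h2
    | 3, _ => exact h3
    | k + 4, _ =>
      rw [hx _ le_add_self, hy _ le_add_self, ih (k + 4 - 1) (by omega) (by omega),
        ih (k + 4 - 2) (by omega) (by omega), ih (k + 4 - 3) (by omega) (by omega)]

theorem stmt_6_general (l : ℝ) (hl : 0 < l) (hint : ∀ k : ℤ, (2 / l : ℝ) ≠ (k : ℝ))
    (a b : ℕ → ℝ)
    (ha1 : a 1 = 2 + l) (ha2 : a 2 = 2 * l ^ 2 + 7 * l + 2)
    (ha3 : a 3 = 6 * l ^ 3 + 26 * l ^ 2 + 22 * l + 2)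
    (hb1 : b 1 = l) (hb2 : b 2 = 2 * l ^ 2 + 3 * l)
    (hb3 : b 3 = 6 * l ^ 3 + 14 * l ^ 2 + 6 * l)
    (harec : ∀ n : ℕ, 4 ≤ n →
      a n = (l * (n : ℝ) + 3) * a (n - 1) - (l * ((n : ℝ) - 2) + 3) * a (n - 2)
            + a (n - 3))
    (hbrec : ∀ n : ℕ, 4 ≤ n →
      b n = (l * (n : ℝ) + 3) * b (n - 1) - (l * ((n : ℝ) - 2) + 3) * b (n - 2)
            + b (n - 3)) :
    ∀ n : ℕ, 1 ≤ n →
      a n = ((2 * l ^ 2 + 8 * l + 5) * Dlt (n : ℤ) 1 (2 + l) l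
              - (l + 3) * Dlt (n : ℤ) 2 (2 + l) l) / l ∧
      b n = ((2 * l ^ 2 + 4 * l + 1) * Dlt (n : ℤ) 1 (2 + l) l
              - (l + 1) * Dlt (n : ℤ) 2 (2 + l) l) / l := by
  have hA : ∀ k : ℤ, (2 + l) / l ≠ k := fun k hk =>
    hint (k - 1) (by push_cast; rw [← hk]; field_simp; ring)
  have h11 : Dlt 1 1 (2 + l) l = l := Dlt_self hl hA 1
  have h22 : Dlt 2 2 (2 + l) l = l := Dlt_self hl hA 2
  have h21 : Dlt 2 1 (2 + l) l = l := Dlt_add_one_self hl hA 1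
  have h32 : Dlt 3 2 (2 + l) l = l := Dlt_add_one_self hl hA 2
  have h31 := Dlt_add_two_self hl hA 1
  have h12 := Dlt_self_add_one hl hA 1
  norm_num at h31 h12
  simp only [imp_and, forall_and]
  refine ⟨eq_of_third_order_recurrence harec ?_ ?_ ?_ ?_,
    eq_of_third_order_recurrence hbrec ?_ ?_ ?_ ?_⟩
  all_goals first
    | intro k hk
      rw [Dlt_natCast_eq_recurrence hl 1 hk, Dlt_natCast_eq_recurrence hl 2 hk]
      ring
    | norm_num [ha1, ha2, ha3, hb1, hb2, hb3, h11, h12, h21, h22, h31, h32]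
      field_simp
      ring

/-- With `λ > 0`, `2/λ` not an integer, `A = 2+λ`, `B = λ`, the sequences
`a_n`, `b_n` (given initial values and the three-term recursion) satisfy, for `n ≥ 1`,
`a_n = ((2λ²+8λ+5) Δ(n,1,A,B) − (λ+3) Δ(n,2,A,B))/λ` and
`b_n = ((2λ²+4λ+1) Δ(n,1,A,B) − (λ+1) Δ(n,2,A,B))/λ`. -/
theorem stmt_6 (l : ℝ) (hl : 0 < l) (hint : ∀ k : ℤ, (2 / l : ℝ) ≠ (k : ℝ))
    (a b : ℕ → ℝ)
    (ha0 : a 0 = 1) (ha1 : a 1 = 2 + l) (ha2 : a 2 = 2 * l ^ 2 + 7 * l + 2)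
    (ha3 : a 3 = 6 * l ^ 3 + 26 * l ^ 2 + 22 * l + 2)
    (hb0 : b 0 = 0) (hb1 : b 1 = l) (hb2 : b 2 = 2 * l ^ 2 + 3 * l)
    (hb3 : b 3 = 6 * l ^ 3 + 14 * l ^ 2 + 6 * l)
    (harec : ∀ n : ℕ, 4 ≤ n →
      a n = (l * (n : ℝ) + 3) * a (n - 1) - (l * ((n : ℝ) - 2) + 3) * a (n - 2)
            + a (n - 3))
    (hbrec : ∀ n : ℕ, 4 ≤ n →
      b n = (l * (n : ℝ) + 3) * b (n - 1) - (l * ((n : ℝ) - 2) + 3) * b (n - 2)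
            + b (n - 3)) :
    ∀ n : ℕ, 1 ≤ n →
      a n = ((2 * l ^ 2 + 8 * l + 5) * Dlt (n : ℤ) 1 (2 + l) l
              - (l + 3) * Dlt (n : ℤ) 2 (2 + l) l) / l ∧
      b n = ((2 * l ^ 2 + 4 * l + 1) * Dlt (n : ℤ) 1 (2 + l) l
              - (l + 1) * Dlt (n : ℤ) 2 (2 + l) l) / l :=
  stmt_6_general l hl hint a b ha1 ha2 ha3 hb1 hb2 hb3 harec hbrec
end

section
/- For every real λ ≥ 0, ∫_0^1 (1−x)^{−λ/(2+λ)}·(x+1)·e^{x/(2+λ)} dx = 2+λ. -/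
open Set MeasureTheory intervalIntegral Real

/-!
With `c = 2 + λ`, the integrand is the derivative of `-c (1 - x)^{2/c} e^{x/c}`: differentiating
gives `(1 - x)^{2/c - 1} e^{x/c} (2 - (1 - x))`. This antiderivative vanishes at `1` and equals
`-c` at `0`; the singularity of the integrand at `1` is integrable since `2/c - 1 > -1`.
-/

lemma hasDerivAt_neg_mul_one_sub_rpow_mul_exp {c x : ℝ} (hc : c ≠ 0) (hx : x < 1) :
    HasDerivAt (fun y => -c * ((1 - y) ^ (2 / c) * exp (y / c)))
      ((1 - x) ^ (2 / c - 1) * (x + 1) * exp (x / c)) x := by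
  have hpos : 0 < 1 - x := by linarith
  have hpow : HasDerivAt (fun y : ℝ => (1 - y) ^ (2 / c))
      (-1 * (2 / c) * (1 - x) ^ (2 / c - 1)) x :=
    ((hasDerivAt_id x).const_sub 1).rpow_const (Or.inl hpos.ne')
  have hexp : HasDerivAt (fun y : ℝ => exp (y / c)) (exp (x / c) * (1 / c)) x :=
    ((hasDerivAt_id' x).div_const c).exp
  refine ((hpow.mul hexp).const_mul (-c)).congr_deriv ?_
  have hsplit : (1 - x) ^ (2 / c) = (1 - x) ^ (2 / c - 1) * (1 - x) := by
    rw [← rpow_add_one hpos.ne', sub_add_cancel]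
  rw [hsplit]
  field_simp
  ring

lemma intervalIntegrable_one_sub_rpow_mul {a b r : ℝ} (hr : -1 < r) {g : ℝ → ℝ}
    (hg : ContinuousOn g (uIcc a b)) :
    IntervalIntegrable (fun x => (1 - x) ^ r * g x) volume a b := by
  have hsing : IntervalIntegrable (fun x : ℝ => (1 - x) ^ r) volume a b := by
    simpa using (intervalIntegrable_rpow' (a := 1 - a) (b := 1 - b) hr).comp_sub_left 1
  exact hsing.mul_continuousOn hg

theorem integral_one_sub_rpow_mul_exp {c : ℝ} (hc : 0 < c) :
    ∫ x in (0:ℝ)..1, (1 - x) ^ (2 / c - 1) * (x + 1) * exp (x / c) = c := by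
  have hexp_pos : 0 < 2 / c := by positivity
  have hcont : ContinuousOn (fun y => -c * ((1 - y) ^ (2 / c) * exp (y / c))) (Icc 0 1) :=
    fun y _ => ((((continuousAt_const.sub continuousAt_id).rpow_const (Or.inr hexp_pos.le)).mul
      (by fun_prop)).const_mul (-c)).continuousWithinAt
  have hint : IntervalIntegrable (fun x => (1 - x) ^ (2 / c - 1) * (x + 1) * exp (x / c))
      volume 0 1 := by
    simpa only [mul_assoc] using intervalIntegrable_one_sub_rpow_mul (by linarith)
      (g := fun x => (x + 1) * exp (x / c)) (by fun_prop)
  rw [integral_eq_sub_of_hasDerivAt_of_le zero_le_one hcont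
    (fun x hx => hasDerivAt_neg_mul_one_sub_rpow_mul_exp hc.ne' hx.2) hint]
  simp [zero_rpow hexp_pos.ne']

/-- For every real `λ ≥ 0`,
`∫₀¹ (1−x)^{−λ/(2+λ)} (x+1) e^{x/(2+λ)} dx = 2+λ`. -/
theorem stmt_17 (l : ℝ) (hl : 0 ≤ l) :
    (∫ x in (0:ℝ)..1,
      (1 - x) ^ (-(l / (2 + l))) * (x + 1) * Real.exp (x / (2 + l))) = 2 + l := by
  have hc : 0 < 2 + l := by linarith
  have hexponent : -(l / (2 + l)) = 2 / (2 + l) - 1 := by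
    field_simp
    ring
  rw [hexponent, integral_one_sub_rpow_mul_exp hc]
end
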